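/- Let a : [0,2] → ℝ be continuous with a(x) = 0 for x ∈ [0,1] and ∫₁² a(s) ds = √2. Define u(x) = 0 for x ∈ [0,1) and u(x) = ∫₁ˣ a(s) ds for x ∈ [1,2]. Then u is C¹ on [0,2], u satisfies u'(x) = ⟨u,a⟩ · a(x) for all x ∈ [0,2], where ⟨u,a⟩ = ∫₀² u(t)a(t) dt, and u vanishes on the open set (0,1) but is not identically zero. Hence the nonlocal perturbed equation u' = ⟨u,a⟩a fails the weak unique continuation property. -/

import Mathlib

open MeasureTheory intervalIntegral

/-- Failure of weak UCP for the nonlocal perturbed equation `u' = ⟨u,a⟩·a`: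
with `a` continuous, vanishing on `[0,1]`, `∫₁² a = √2`, the function
`u x = ∫₁ˣ a(s) ds` is C¹, solves `u'(x) = (∫₀² u t * a t dt) * a x` on `[0,2]`,
vanishes on the open set `(0,1)`, but is not identically zero. -/
theorem stmt_2 (a : ℝ → ℝ) (ha : Continuous a)
    (ha0 : ∀ x ∈ Set.Icc (0 : ℝ) 1, a x = 0)
    (haint : ∫ s in (1 : ℝ)..2, a s = Real.sqrt 2)
    (u : ℝ → ℝ) (hu : u = fun x => ∫ s in (1 : ℝ)..x, a s) :
    ContDiff ℝ 1 u ∧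
    (∀ x ∈ Set.Icc (0 : ℝ) 2,
      HasDerivAt u ((∫ t in (0 : ℝ)..2, u t * a t) * a x) x) ∧
    (∀ x ∈ Set.Ioo (0 : ℝ) 1, u x = 0) ∧
    u 2 ≠ 0 := by
  have hderiv : ∀ x, HasDerivAt u (a x) x := by
    intro x
    rw [hu]
    exact (ha.integral_hasStrictDerivAt 1 x).hasDerivAt
  have hucont : Continuous u :=
    continuous_iff_continuousAt.2 fun x => (hderiv x).continuousAt
  have hu1 : u 1 = 0 := by simp [hu]
  have hu2 : u 2 = Real.sqrt 2 := by rw [hu]; exact haint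
  have hint : ∀ b c : ℝ, IntervalIntegrable (fun t => u t * a t) volume b c :=
    fun b c => (hucont.mul ha).intervalIntegrable b c
  have h01 : (∫ t in (0:ℝ)..1, u t * a t) = 0 := by
    rw [intervalIntegral.integral_congr (g := fun _ => (0:ℝ))]
    · simp
    · intro t ht
      rw [Set.uIcc_of_le (by norm_num : (0:ℝ) ≤ 1)] at ht
      simp [ha0 t ht]
  have h12 : (∫ t in (1:ℝ)..2, u t * a t) = 1 := by
    have hd : ∀ t ∈ Set.uIcc (1:ℝ) 2,
        HasDerivAt (fun x => u x * u x / 2) (u t * a t) t := by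
      intro t _
      refine (((hderiv t).mul (hderiv t)).div_const 2).congr_deriv ?_
      ring
    rw [intervalIntegral.integral_eq_sub_of_hasDerivAt hd (hint 1 2), hu1, hu2,
      Real.mul_self_sqrt (by norm_num)]
    norm_num
  have key : (∫ t in (0:ℝ)..2, u t * a t) = 1 := by
    rw [← intervalIntegral.integral_add_adjacent_intervals (hint 0 1) (hint 1 2),
      h01, h12, zero_add]
  refine ⟨?_, ?_, ?_, ?_⟩
  · rw [contDiff_one_iff_deriv]
    refine ⟨fun x => (hderiv x).differentiableAt, ?_⟩
    have : deriv u = a := funext fun x => (hderiv x).deriv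
    rw [this]; exact ha
  · intro x _
    rw [key, one_mul]
    exact hderiv x
  · intro x hx
    rw [hu]
    rw [← neg_eq_zero, ← intervalIntegral.integral_symm]
    rw [intervalIntegral.integral_congr (g := fun _ => (0:ℝ))]
    · simp
    · intro t ht
      rw [Set.uIcc_of_le (le_of_lt hx.2)] at ht
      exact ha0 t ⟨le_trans (le_of_lt hx.1) ht.1, ht.2⟩
  · rw [hu2]
    positivity
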